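/- Let H be a phylogenetic tree, and let G be a spanning subgraph of H^+_3 such that (i) A_par ⊆ E(G), and (ii) (v,u) ∈ E(G) for every arc (u,v) ∈ E(G) \ A_par. If G contains a directed cycle containing at least one arc from A_par, then G contains a directed cycle with at most 4 vertices containing at least one arc from A_par. -/

import Mathlib

/-- A phylogenetic tree: a finite rooted full binary tree. Every vertex has a `parent`
(the root being its own parent), iterating `parent` from any vertex reaches the root,
and every vertex has either `0` or `2` children. -/
structure PhyloTree (V : Type*) [Fintype V] [DecidableEq V] where
  root : V
  parent : V → V
  parent_root : parent root = root
  toRoot : ∀ v : V, ∃ n : ℕ, parent^[n] v = root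
  binary : ∀ v : V,
      (Finset.univ.filter fun w => parent w = v ∧ w ≠ root).card = 0 ∨
      (Finset.univ.filter fun w => parent w = v ∧ w ≠ root).card = 2

namespace PhyloTree

variable {V : Type*} [Fintype V] [DecidableEq V]

/-- `T.ParentArc a b` : `a` is the parent of `b`; these are the arcs of the tree
(the strict arcs, forming the set `A_par`). -/
def ParentArc (T : PhyloTree V) (a b : V) : Prop :=
  T.parent b = a ∧ b ≠ T.root

/-- `T.Anc a b` : `a` is an ancestor of `b`, equivalently `b` is a descendant of `a`
(this includes the case `a = b`). -/
def Anc (T : PhyloTree V) (a b : V) : Prop :=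
  ∃ n : ℕ, T.parent^[n] b = a

/-- `a` and `b` are incomparable: neither is an ancestor of the other. -/
def Incomp (T : PhyloTree V) (a b : V) : Prop :=
  ¬ T.Anc a b ∧ ¬ T.Anc b a

/-- `a` and `b` are siblings: distinct nodes with the same parent. -/
def Sibling (T : PhyloTree V) (a b : V) : Prop :=
  a ≠ b ∧ a ≠ T.root ∧ b ≠ T.root ∧ T.parent a = T.parent b

/-- `a` and `b` are cousins: their parents are siblings. -/
def Cousin (T : PhyloTree V) (a b : V) : Prop :=
  a ≠ T.root ∧ b ≠ T.root ∧ T.Sibling (T.parent a) (T.parent b)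

/-- A leaf: a node with no children. -/
def IsLeaf (T : PhyloTree V) (a : V) : Prop := ∀ b, ¬ T.ParentArc a b

theorem parentArc_irrefl (T : PhyloTree V) (a : V) : ¬ T.ParentArc a a := by
  rintro ⟨h, hr⟩
  obtain ⟨n, hn⟩ := T.toRoot a
  exact hr ((Function.iterate_fixed h n).symm.trans hn)

/-- The underlying undirected graph of the tree. -/
def ugraph (T : PhyloTree V) : SimpleGraph V where
  Adj a b := T.ParentArc a b ∨ T.ParentArc b a
  symm := ⟨fun _ _ h => h.symm⟩
  loopless := ⟨fun a h => by
    rcases h with h | h <;> exact T.parentArc_irrefl a h⟩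

/-- `T.dist a b` : the number of edges on the unique undirected path between `a` and `b`. -/
noncomputable def dist (T : PhyloTree V) (a b : V) : ℕ := T.ugraph.dist a b

/-- `T.IsLCA c a b` : `c` is the lowest common ancestor of `a` and `b`. -/
def IsLCA (T : PhyloTree V) (c a b : V) : Prop :=
  T.Anc c a ∧ T.Anc c b ∧ ∀ d, T.Anc d a → T.Anc d b → T.Anc d c

/-- The level of a node: `-dist(v, root)`, so nodes closer to the root have higher level. -/
noncomputable def level (T : PhyloTree V) (v : V) : ℤ := -(T.dist v T.root : ℤ)

/-- Arc `(a,b)` of the digraph `H⁺_d`: either a parent-to-child arc of the tree, or an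
arc between distinct incomparable vertices at distance at most `d`. -/
def HplusArc (T : PhyloTree V) (d : ℕ) (a b : V) : Prop :=
  T.ParentArc a b ∨ (a ≠ b ∧ T.Incomp a b ∧ T.dist a b ≤ d)

/-- `(a,b) ∈ A_sib` : arcs (in both directions) between siblings. -/
def SibArc (T : PhyloTree V) (a b : V) : Prop := T.Sibling a b

/-- `(a,b) ∈ A_nep` : arcs (in both directions) between a node and a child of its sibling. -/
def NepArc (T : PhyloTree V) (a b : V) : Prop :=
  (∃ s, T.Sibling s b ∧ T.ParentArc s a) ∨ (∃ s, T.Sibling s a ∧ T.ParentArc s b)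

/-- `(a,b) ∈ A_gnep` : arcs (in both directions) between a node and a grandchild of its
sibling. -/
def GnepArc (T : PhyloTree V) (a b : V) : Prop :=
  (∃ s c, T.Sibling s b ∧ T.ParentArc s c ∧ T.ParentArc c a) ∨
  (∃ s c, T.Sibling s a ∧ T.ParentArc s c ∧ T.ParentArc c b)

/-- `(a,b) ∈ A_cos` : arcs (in both directions) between cousins. -/
def CosArc (T : PhyloTree V) (a b : V) : Prop := T.Cousin a b

end PhyloTree

/-- A directed cycle in the digraph with arc relation `G`, represented as an injective
cyclic sequence `f` of `n ≥ 2` vertices in which every consecutive arc is present. -/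
def IsDicycle {α : Type*} (G : α → α → Prop) {n : ℕ} (f : ZMod n → α) : Prop :=
  2 ≤ n ∧ Function.Injective f ∧ ∀ i, G (f i) (f (i + 1))

/-- There is a directed path from `s` to `t` in the digraph `G` containing at least one
strict arc (i.e. parent-to-child arc of the tree `T`); here strict arcs of the graphs we
consider are always arcs of `G`. -/
def StrictReach {V : Type*} [Fintype V] [DecidableEq V] (T : PhyloTree V)
    (G : V → V → Prop) (s t : V) : Prop :=
  ∃ a b, Relation.ReflTransGen G s a ∧ T.ParentArc a b ∧ Relation.ReflTransGen G b t

section Reconciliation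

variable {VH VP : Type*} [Fintype VH] [DecidableEq VH] [Fintype VP] [DecidableEq VP]

/-- Host-switch event: one of the children's images is incomparable to `hp`, the other is
a descendant of `hp`. -/
def SwitchEvent (TH : PhyloTree VH) (hp h1 h2 : VH) : Prop :=
  (TH.Incomp h1 hp ∧ TH.Anc hp h2) ∨ (TH.Incomp h2 hp ∧ TH.Anc hp h1)

/-- Cospeciation event: the children's images are incomparable with LCA `hp`. -/
def CospEvent (TH : PhyloTree VH) (hp h1 h2 : VH) : Prop :=
  TH.Incomp h1 h2 ∧ TH.IsLCA hp h1 h2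

/-- Duplication event: both children's images are descendants of `hp`, and neither the
host-switch case nor the cospeciation case applies. -/
def DupEvent (TH : PhyloTree VH) (hp h1 h2 : VH) : Prop :=
  TH.Anc hp h1 ∧ TH.Anc hp h2 ∧ ¬ SwitchEvent TH hp h1 h2 ∧ ¬ CospEvent TH hp h1 h2

/-- `φ` is a reconciliation of `(H, P, σ)`: it agrees with `σ` on leaves, and at every
internal node exactly one of the three events (host switch, cospeciation, duplication)
applies. -/
def IsReconciliation (TH : PhyloTree VH) (TP : PhyloTree VP) (σ : VP → VH)
    (φ : VP → VH) : Prop :=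
  (∀ p, TP.IsLeaf p → φ p = σ p) ∧
  ∀ p p1 p2, TP.ParentArc p p1 → TP.ParentArc p p2 → p1 ≠ p2 →
    SwitchEvent TH (φ p) (φ p1) (φ p2) ∨ CospEvent TH (φ p) (φ p1) (φ p2) ∨
      DupEvent TH (φ p) (φ p1) (φ p2)

/-- `(u,v)` is a switching edge of `P` with respect to `φ` : `u` is the parent of `v` in
`P` and `φ u`, `φ v` are incomparable in `H`. -/
def SwitchingEdge (TH : PhyloTree VH) (TP : PhyloTree VP) (φ : VP → VH) (u v : VP) : Prop :=
  TP.ParentArc u v ∧ TH.Incomp (φ u) (φ v)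

/-- Arc `(a,b)` of `G^φ` : either a (strict) parent-to-child arc of `H`, or a (relaxed)
arc coming, in either direction, from a switching edge. -/
def GphiArc (TH : PhyloTree VH) (TP : PhyloTree VP) (φ : VP → VH) (a b : VH) : Prop :=
  TH.ParentArc a b ∨
    ∃ u v, SwitchingEdge TH TP φ u v ∧ ((a = φ u ∧ b = φ v) ∨ (a = φ v ∧ b = φ u))

/-- `φ` is strongly acyclic: no directed cycle of `G^φ` contains a strict arc. -/
def StronglyAcyclic (TH : PhyloTree VH) (TP : PhyloTree VP) (φ : VP → VH) : Prop :=
  ¬ ∃ (n : ℕ) (f : ZMod n → VH),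
      IsDicycle (GphiArc TH TP φ) f ∧ ∃ i, TH.ParentArc (f i) (f (i + 1))

/-- Arc `(a,b)` of `D^φ` : either an arc of `H`, or an arc from the parent of `φ u` or of
`φ v` (when it exists) to `φ u'` or `φ v'`, for switching edges `(u,v)`, `(u',v')` with
`u` an ancestor of `u'` in `P`. -/
def DphiArc (TH : PhyloTree VH) (TP : PhyloTree VP) (φ : VP → VH) (a b : VH) : Prop :=
  TH.ParentArc a b ∨
    ∃ u v u' v', SwitchingEdge TH TP φ u v ∧ SwitchingEdge TH TP φ u' v' ∧
      TP.Anc u u' ∧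
      ((φ u ≠ TH.root ∧ a = TH.parent (φ u)) ∨ (φ v ≠ TH.root ∧ a = TH.parent (φ v))) ∧
      (b = φ u' ∨ b = φ v')

/-- `φ` is acyclic (time-feasible): `D^φ` contains no directed cycle. -/
def Acyclic (TH : PhyloTree VH) (TP : PhyloTree VP) (φ : VP → VH) : Prop :=
  ¬ ∃ (n : ℕ) (f : ZMod n → VH), IsDicycle (DphiArc TH TP φ) f

end Reconciliation

/-- `G` contains no Type 1 cycle `(h_j, h_k, h_{k1})`, where `h_j`, `h_k` are siblings and
`h_{k1}` is a child of `h_k`. -/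
def NoType1 {V : Type*} [Fintype V] [DecidableEq V] (T : PhyloTree V)
    (G : V → V → Prop) : Prop :=
  ¬ ∃ hj hk hk1, T.Sibling hj hk ∧ T.ParentArc hk hk1 ∧
      G hj hk ∧ G hk hk1 ∧ G hk1 hj

/-- `G` contains no Type 2 cycle `(h_j, h_{j1}, h_k, h_{k1})`, where `h_j`, `h_k` are
siblings, `h_{j1}` is a child of `h_j` and `h_{k1}` is a child of `h_k`. -/
def NoType2 {V : Type*} [Fintype V] [DecidableEq V] (T : PhyloTree V)
    (G : V → V → Prop) : Prop :=
  ¬ ∃ hj hj1 hk hk1, T.Sibling hj hk ∧ T.ParentArc hj hj1 ∧ T.ParentArc hk hk1 ∧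
      G hj hj1 ∧ G hj1 hk ∧ G hk hk1 ∧ G hk1 hj

/-- `G` contains no Type 3 cycle `(h_j, h_{k1}, h_{k3}, h_{k2})`, where `h_j`, `h_k` are
siblings, `h_{k1}`, `h_{k2}` are the children of `h_k`, and `h_{k3}` is a child of
`h_{k1}`. -/
def NoType3 {V : Type*} [Fintype V] [DecidableEq V] (T : PhyloTree V)
    (G : V → V → Prop) : Prop :=
  ¬ ∃ hj hk hk1 hk2 hk3, T.Sibling hj hk ∧ hk1 ≠ hk2 ∧
      T.ParentArc hk hk1 ∧ T.ParentArc hk hk2 ∧ T.ParentArc hk1 hk3 ∧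
      G hj hk1 ∧ G hk1 hk3 ∧ G hk3 hk2 ∧ G hk2 hj

variable {V : Type*} [Fintype V] [DecidableEq V]

/-!
Take a directed cycle of `G` through a parent arc `a → b` that is as short as possible and,
among those, has `b` as deep as possible. Every arc of `G` outside `A_par` joins two siblings
or a vertex and a child of its sibling, so the arcs next to `a → b` are very constrained: each
possibility yields a parent arc that is a chord of the cycle (hence a shorter cycle through a
parent arc), a deeper parent arc on a cycle of the same length (possibly after replacing `b`
by its sibling), or two equal vertices at most four steps apart on the cycle. So a cycle with
more than four vertices is never extremal.
-/

theorem ZMod.val_add_one_of_val_lt {m : ℕ} {t : ZMod (m + 1)} (ht : t.val < m) :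
    (t + 1).val = t.val + 1 :=
  Fin.val_add_one_of_lt ht

section Dicycle

variable {α : Type*} {G : α → α → Prop} {n : ℕ} {f : ZMod n → α}

theorem IsDicycle.apply_ne_of_sub_eq (hf : IsDicycle G f) {i j : ZMod n} {d : ℕ}
    (hd₀ : 0 < d) (hdn : d < n) (h : j - i = d) : f j ≠ f i := by
  intro hji
  rw [hf.2.1 hji, sub_self, eq_comm, ZMod.natCast_eq_zero_iff] at h
  exact absurd (Nat.le_of_dvd hd₀ h) (by omega)

theorem IsDicycle.exists_of_chord (hf : IsDicycle G f) {j k : ZMod n} (hG : G (f j) (f k))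
    (hjk : f j ≠ f k) (hk : f (j + 1) ≠ f k) :
    ∃ m < n, ∃ g : ZMod m → α, IsDicycle G g ∧ ∃ i, g i = f j ∧ g (i + 1) = f k := by
  obtain ⟨hn, hinj, harc⟩ := hf
  have : NeZero n := ⟨by omega⟩
  set d := (j - k).val with hd
  have hkd : k + (d : ZMod n) = j := by rw [hd, ZMod.natCast_zmod_val]; ring
  have hd₀ : d ≠ 0 := fun h => hjk (by rw [← hkd, h]; simp)
  have hdn : d + 1 ≠ n := by
    intro h
    refine hk (congrArg f ?_)
    rw [← hkd, add_assoc, ← Nat.cast_add_one, h, ZMod.natCast_self, add_zero]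
  have hdlt : d < n := ZMod.val_lt _
  have hcast : ∀ t : ZMod (d + 1), (t.val : ZMod n).val = t.val := fun t =>
    ZMod.val_cast_of_lt ((ZMod.val_lt t).trans_le (by omega))
  have hlast : (d : ZMod (d + 1)).val = d := ZMod.val_cast_of_lt (by omega)
  have hwrap : ∀ t : ZMod (d + 1), t.val = d → t + 1 = 0 := fun t ht => by
    rw [← ZMod.natCast_zmod_val t, ht, ← Nat.cast_add_one, ZMod.natCast_self]
  refine ⟨d + 1, by omega, fun t => f (k + t.val), ⟨by omega, ?_, fun t => ?_⟩, d, ?_, ?_⟩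
  · intro s t hst
    have := congrArg ZMod.val (add_left_cancel (hinj hst))
    rw [hcast, hcast] at this
    exact ZMod.val_injective _ this
  · dsimp only
    rcases (Nat.lt_succ_iff.mp (ZMod.val_lt t)).lt_or_eq with ht | ht
    · rw [ZMod.val_add_one_of_val_lt ht, Nat.cast_add_one, ← add_assoc]; exact harc _
    · rw [ht, hkd, hwrap t ht]; simpa using hG
  · dsimp only
    rw [hlast, hkd]
  · dsimp only
    rw [hwrap _ hlast]; simp

theorem IsDicycle.update_of_notMem_range (hf : IsDicycle G f) {p : ZMod n} {s : α}
    (hs : s ∉ Set.range f) (h₁ : G (f (p - 1)) s) (h₂ : G s (f (p + 1))) :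
    IsDicycle G (Function.update f p s) := by
  have hp : p + 1 ≠ p := fun h => hf.apply_ne_of_sub_eq one_pos hf.1 (by simp) (congrArg f h)
  obtain ⟨hn, hinj, harc⟩ := hf
  refine ⟨hn, fun x y hxy => ?_, fun q => ?_⟩
  · simp only [Function.update_apply] at hxy
    split_ifs at hxy with hx hy hy
    · exact hx.trans hy.symm
    · exact absurd ⟨y, hxy.symm⟩ hs
    · exact absurd ⟨x, hxy⟩ hs
    · exact hinj hxy
  · simp only [Function.update_apply]
    split_ifs with hq hq' hq'
    · exact absurd (hq ▸ hq') hp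
    · exact hq ▸ h₂
    · rwa [← hq', add_sub_cancel_right] at h₁
    · exact harc q

end Dicycle

namespace PhyloTree

variable {T : PhyloTree V} {a b c : V}

theorem ParentArc.ne (h : T.ParentArc a b) : a ≠ b := by
  rintro rfl
  exact T.parentArc_irrefl a h

theorem ParentArc.anc (h : T.ParentArc a b) : T.Anc a b := ⟨1, h.1⟩

theorem Anc.trans (h₁ : T.Anc a b) (h₂ : T.Anc b c) : T.Anc a c := by
  obtain ⟨k, rfl⟩ := h₁
  obtain ⟨l, rfl⟩ := h₂
  exact ⟨k + l, Function.iterate_add_apply _ _ _ _⟩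

theorem Sibling.symm (h : T.Sibling a b) : T.Sibling b a :=
  ⟨h.1.symm, h.2.2.1, h.2.1, h.2.2.2.symm⟩

theorem Sibling.eq (h₁ : T.Sibling a b) (h₂ : T.Sibling a c) : b = c := by
  by_contra hbc
  have hsub : ({a, b, c} : Finset V) ⊆
      Finset.univ.filter fun w => T.parent w = T.parent a ∧ w ≠ T.root := by
    simp [Finset.insert_subset_iff, h₁.2.1, h₁.2.2.1, h₂.2.2.1, ← h₁.2.2.2, ← h₂.2.2.2]
  have hcard : ({a, b, c} : Finset V).card = 3 :=
    Finset.card_eq_three.mpr ⟨a, b, c, h₁.1, h₂.1, hbc, rfl⟩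
  have := Finset.card_le_card hsub
  rcases T.binary (T.parent a) with h | h <;> omega

theorem Sibling.parentArc (h : T.Sibling a b) (hc : T.ParentArc c a) : T.ParentArc c b :=
  ⟨h.2.2.2.symm.trans hc.1, h.2.2.1⟩

def depth (T : PhyloTree V) (v : V) : ℕ := Nat.find (T.toRoot v)

theorem depth_eq_depth_parent_add_one {v : V} (hv : v ≠ T.root) :
    T.depth v = T.depth (T.parent v) + 1 :=
  Nat.find_comp_succ _ (T.toRoot (T.parent v)) (by simpa using hv)

theorem ParentArc.depth_eq (h : T.ParentArc a b) : T.depth b = T.depth a + 1 := by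
  rw [depth_eq_depth_parent_add_one h.2, h.1]

theorem Sibling.depth_eq (h : T.Sibling a b) : T.depth a = T.depth b := by
  rw [depth_eq_depth_parent_add_one h.2.1, depth_eq_depth_parent_add_one h.2.2.1, h.2.2.2]

theorem reachable_root (v : V) : T.ugraph.Reachable v T.root := by
  obtain ⟨k, hk⟩ := T.toRoot v
  induction k generalizing v with
  | zero => exact hk ▸ .refl v
  | succ k ih =>
    by_cases hv : v = T.root
    · exact hv ▸ .refl v
    · exact (SimpleGraph.Adj.reachable (Or.inr ⟨rfl, hv⟩)).trans (ih _ hk)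

/-- A path of length at most three between incomparable vertices goes up once and down once
(siblings), or up once and down twice, or up twice and down once. -/
theorem sibArc_or_nepArc_of_incomp (hne : a ≠ b) (hinc : T.Incomp a b) (hd : T.dist a b ≤ 3) :
    T.SibArc a b ∨ T.NepArc a b := by
  obtain ⟨p, hp⟩ := ((reachable_root a).trans (reachable_root b).symm).exists_walk_length_eq_dist
  replace hp : p.length ≤ 3 := hp.trans_le hd
  rcases p with _ | @⟨_, x, _, h₁, _ | @⟨_, y, _, h₂, _ | ⟨h₃, _ | ⟨_, p⟩⟩⟩⟩
  · exact absurd rfl hne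
  · rcases h₁ with h₁ | h₁
    exacts [absurd h₁.anc hinc.1, absurd h₁.anc hinc.2]
  · rcases h₁ with h₁ | h₁ <;> rcases h₂ with h₂ | h₂
    · exact absurd (h₁.anc.trans h₂.anc) hinc.1
    · exact absurd (h₁.1.symm.trans h₂.1) hne
    · exact Or.inl ⟨hne, h₁.2, h₂.2, h₁.1.trans h₂.1.symm⟩
    · exact absurd (h₂.anc.trans h₁.anc) hinc.2
  · rcases h₁ with h₁ | h₁ <;> rcases h₂ with h₂ | h₂ <;> rcases h₃ with h₃ | h₃
    · exact absurd (h₁.anc.trans (h₂.anc.trans h₃.anc)) hinc.1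
    · exact absurd ((h₂.1.symm.trans h₃.1) ▸ h₁.anc) hinc.1
    · exact absurd ((h₁.1.symm.trans h₂.1) ▸ h₃.anc) hinc.1
    · exact absurd ((h₁.1.symm.trans h₂.1) ▸ h₃.anc) hinc.2
    · by_cases hya : y = a
      · exact absurd (hya ▸ h₃.anc) hinc.1
      · exact Or.inr (Or.inr ⟨y, ⟨hya, h₂.2, h₁.2, h₂.1.trans h₁.1.symm⟩, h₃⟩)
    · exact absurd ((h₂.1.symm.trans h₃.1) ▸ h₁.anc) hinc.2
    · by_cases hxb : x = b
      · exact absurd (hxb ▸ h₁.anc) hinc.2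
      · exact Or.inr (Or.inl ⟨x, ⟨hxb, h₂.2, h₃.2, h₂.1.trans h₃.1.symm⟩, h₁⟩)
    · exact absurd (h₃.anc.trans (h₂.anc.trans h₁.anc)) hinc.2
  · simp at hp; omega

theorem parentArc_or_sibArc_or_nepArc (h : T.HplusArc 3 a b) :
    T.ParentArc a b ∨ T.SibArc a b ∨ T.NepArc a b :=
  h.imp_right fun ⟨hne, hinc, hd⟩ => sibArc_or_nepArc_of_incomp hne hinc hd

end PhyloTree

section ShortCycle

open PhyloTree

variable {T : PhyloTree V} {G : V → V → Prop} {n : ℕ}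

def HeadOfParCycle (T : PhyloTree V) (G : V → V → Prop) (n : ℕ) (b : V) : Prop :=
  ∃ f : ZMod n → V, IsDicycle G f ∧ ∃ i, T.ParentArc (f i) (f (i + 1)) ∧ f (i + 1) = b

def ExistsBetterParCycle (T : PhyloTree V) (G : V → V → Prop) (n : ℕ) (b : V) : Prop :=
  (∃ m < n, ∃ b', HeadOfParCycle T G m b') ∨
    ∃ b', T.depth b < T.depth b' ∧ HeadOfParCycle T G n b'

theorem ExistsBetterParCycle.of_depth_le {b b' : V} (h : ExistsBetterParCycle T G n b')
    (hd : T.depth b ≤ T.depth b') : ExistsBetterParCycle T G n b :=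
  h.imp_right fun ⟨c, hc, hcyc⟩ => ⟨c, hd.trans_lt hc, hcyc⟩

theorem existsBetterParCycle_of_chord (hpar : ∀ a b, T.ParentArc a b → G a b)
    {f : ZMod n → V} (hf : IsDicycle G f) {j k : ZMod n} (hjk : T.ParentArc (f j) (f k))
    (hk : f (j + 1) ≠ f k) (b : V) : ExistsBetterParCycle T G n b := by
  obtain ⟨m, hm, g, hg, i, hgi, hgi'⟩ := hf.exists_of_chord (hpar _ _ hjk) hjk.ne hk
  exact Or.inl ⟨m, hm, _, g, hg, i, hgi ▸ hgi' ▸ hjk, rfl⟩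

theorem existsBetterParCycle_or_sibling (hsub : ∀ a b, G a b → T.HplusArc 3 a b)
    (hpar : ∀ a b, T.ParentArc a b → G a b) {f : ZMod n → V} (hf : IsDicycle G f)
    {i : ZMod n} (hab : T.ParentArc (f i) (f (i + 1))) :
    ExistsBetterParCycle T G n (f (i + 1)) ∨ T.Sibling (f i) (f (i + 1 + 1)) := by
  rcases parentArc_or_sibArc_or_nepArc (hsub _ _ (hf.2.2 (i + 1))) with
    hbc | hbc | ⟨s, hsc, hsb⟩ | ⟨s, hsb, hsc⟩
  · exact Or.inl (Or.inr ⟨_, by rw [hbc.depth_eq]; omega, f, hf, i + 1, hbc, rfl⟩)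
  · exact Or.inl (existsBetterParCycle_of_chord hpar hf (hbc.parentArc hab) hbc.1 _)
  · obtain rfl : s = f i := hsb.1.symm.trans hab.1
    exact Or.inr hsc
  · refine Or.inl ?_
    by_cases hs : s ∈ Set.range f
    · obtain ⟨j, rfl⟩ := hs
      refine existsBetterParCycle_of_chord hpar hf hsc (fun h => hsb.1 ?_) _
      rw [add_right_cancel (hf.2.1 h)]
    -- replace `f (i + 1)` by its sibling `s`, whose child `f (i + 2)` is deeper
    · have has : G (f (i + 1 - 1)) s := by
        rw [add_sub_cancel_right]; exact hpar _ _ (hsb.symm.parentArc hab)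
      have hg := hf.update_of_notMem_range hs has (hpar _ _ hsc)
      have hp : i + 1 + 1 ≠ i + 1 := fun h => hf.apply_ne_of_sub_eq one_pos hf.1 (by simp)
        (congrArg f h)
      refine Or.inr ⟨_, by rw [hsc.depth_eq, hsb.depth_eq]; omega, _, hg, i + 1, ?_, ?_⟩
      · rw [Function.update_self, Function.update_of_ne hp]; exact hsc
      · exact Function.update_of_ne hp _ _

/-- Write `z, a, b, c, y` for `f (i - 1), …, f (i + 3)`. Unless the arc `b → c` already
improves the cycle, `c` is the sibling of `a`; then every type of the arcs `z → a` and `c → y`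
yields a parent-arc chord or a repeated vertex, a parent arc `c → y` being handled like
`a → b`. -/
theorem existsBetterParCycle_of_four_lt (hsub : ∀ a b, G a b → T.HplusArc 3 a b)
    (hpar : ∀ a b, T.ParentArc a b → G a b) (hn : 4 < n) {b : V}
    (h : HeadOfParCycle T G n b) : ExistsBetterParCycle T G n b := by
  obtain ⟨f, hf, i, hab, rfl⟩ := h
  have hne {j k : ZMod n} (d : ℕ) (hd : 0 < d) (hdn : d < n) (h : k - j = d) : f k ≠ f j :=
    hf.apply_ne_of_sub_eq hd hdn h
  rcases existsBetterParCycle_or_sibling hsub hpar hf hab with hbetter | hac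
  · exact hbetter
  have hza : G (f (i - 1)) (f i) := by simpa using hf.2.2 (i - 1)
  rcases parentArc_or_sibArc_or_nepArc (hsub _ _ hza) with
    hza | hza | ⟨t, hta, htz⟩ | ⟨t, htz, hta⟩
  · refine existsBetterParCycle_of_chord hpar hf (hac.parentArc hza) ?_ _
    rw [sub_add_cancel]; exact hac.1
  · exact absurd (hza.symm.eq hac).symm (hne 3 (by norm_num) (by omega) (by ring))
  · obtain rfl : t = f (i + 1 + 1) := hta.symm.eq hac
    refine existsBetterParCycle_of_chord hpar hf htz ?_ _
    exact hne 4 (by norm_num) hn (by ring)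
  · rcases parentArc_or_sibArc_or_nepArc (hsub _ _ (hf.2.2 (i + 1 + 1))) with
      hcy | hcy | ⟨s, hsy, hsc⟩ | ⟨s, hsc, hsy⟩
    · rcases existsBetterParCycle_or_sibling hsub hpar hf hcy with hbetter | hcu
      · exact hbetter.of_depth_le (by rw [hcy.depth_eq, ← hac.depth_eq, hab.depth_eq])
      · exact absurd (hac.symm.eq hcu).symm (hne 4 (by norm_num) hn (by ring))
    · exact absurd (hac.symm.eq hcy).symm (hne 3 (by norm_num) (by omega) (by ring))
    · obtain rfl : s = t := hsc.1.symm.trans (hac.2.2.2.symm.trans hta.1)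
      exact absurd (htz.eq hsy).symm (hne 4 (by norm_num) hn (by ring))
    · obtain rfl : s = f i := (hac.symm.eq hsc.symm).symm
      refine existsBetterParCycle_of_chord hpar hf hsy ?_ _
      exact (hne 2 (by norm_num) (by omega) (by ring)).symm

theorem exists_headOfParCycle_le_four (hsub : ∀ a b, G a b → T.HplusArc 3 a b)
    (hpar : ∀ a b, T.ParentArc a b → G a b) {n : ℕ} {b : V} (h : HeadOfParCycle T G n b) :
    ∃ m ≤ 4, ∃ b', HeadOfParCycle T G m b' := by
  by_cases hn : n ≤ 4
  · exact ⟨n, hn, b, h⟩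
  rcases existsBetterParCycle_of_four_lt hsub hpar (not_le.mp hn) h with
    ⟨m, hm, b', h'⟩ | ⟨b', hb, h'⟩
  · exact exists_headOfParCycle_le_four hsub hpar h'
  · exact exists_headOfParCycle_le_four hsub hpar h'
termination_by (n, Finset.univ.sup T.depth - T.depth b)
decreasing_by
  · exact Prod.Lex.left _ _ hm
  · exact Prod.Lex.right _ (Nat.sub_lt_sub_left
      (hb.trans_le (Finset.le_sup (Finset.mem_univ _))) hb)

end ShortCycle

theorem short_cycle_with_par_arc_dist3_general
    (T : PhyloTree V) (G : V → V → Prop)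
    (hsub : ∀ a b, G a b → T.HplusArc 3 a b)
    (hpar : ∀ a b, T.ParentArc a b → G a b)
    (hex : ∃ (n : ℕ) (f : ZMod n → V),
        IsDicycle G f ∧ ∃ i, T.ParentArc (f i) (f (i + 1))) :
    ∃ (n : ℕ) (f : ZMod n → V), n ≤ 4 ∧
        IsDicycle G f ∧ ∃ i, T.ParentArc (f i) (f (i + 1)) := by
  obtain ⟨n, f, hf, i, hi⟩ := hex
  obtain ⟨m, hm, -, g, hg, j, hj, -⟩ := exists_headOfParCycle_le_four hsub hpar ⟨f, hf, i, hi, rfl⟩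
  exact ⟨m, g, hm, hg, j, hj⟩

/-- Let `G` be a spanning subgraph of `H⁺₃` containing all arcs of
`A_par` and containing, together with each arc not in `A_par`, its reverse. If `G`
contains a directed cycle with an arc of `A_par`, then it contains one with at most `4`
vertices. -/
theorem short_cycle_with_par_arc_dist3
    (T : PhyloTree V) (G : V → V → Prop)
    (hsub : ∀ a b, G a b → T.HplusArc 3 a b)
    (hpar : ∀ a b, T.ParentArc a b → G a b)
    (hrev : ∀ a b, G a b → ¬ T.ParentArc a b → G b a)
    (hex : ∃ (n : ℕ) (f : ZMod n → V),
        IsDicycle G f ∧ ∃ i, T.ParentArc (f i) (f (i + 1))) :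
    ∃ (n : ℕ) (f : ZMod n → V), n ≤ 4 ∧
        IsDicycle G f ∧ ∃ i, T.ParentArc (f i) (f (i + 1)) :=
  short_cycle_with_par_arc_dist3_general T G hsub hpar hex
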